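/- arXiv:1812.11511 — 2 statements merged into one kernel-verified Lean document; each statement's English description precedes it below -/
import Mathlib

section
/- Let A be a residuated lattice and X ⊆ A. Then the filter F(X) generated by X equals the intersection of all prime filters of A containing X (where the intersection over the empty family is A). -/
/-! Given `a ∉ F(X)`, Zorn's lemma yields a filter `P ⊇ F(X)` maximal among the filters
missing `a`. If `x, y ∉ P`, maximality puts `a` into the filters generated by `P ∪ {x}` and
`P ∪ {y}`: `p ⊙ xⁿ ≤ a` and `q ⊙ yᵐ ≤ a` with `p, q ∈ P`. As `⊙` distributes over `⊔` and
`(x ⊔ y)^(mn) ≤ xⁿ ⊔ yᵐ`, we get `p ⊙ q ⊙ (x ⊔ y)^(mn) ≤ a`, so `x ⊔ y ∉ P`: `P` is prime. -/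

class ResiduatedLattice (α : Type*) extends Lattice α, CommMonoid α, BoundedOrder α where
  rimp : α → α → α
  one_eq_top : (1 : α) = ⊤
  adjunction : ∀ x y z : α, x * y ≤ z ↔ x ≤ rimp y z

variable {α : Type*} [ResiduatedLattice α]

/-- A filter of a residuated lattice: nonempty, closed under `⊙` and upward closed. -/
def IsFilter (F : Set α) : Prop :=
  F.Nonempty ∧ (∀ x ∈ F, ∀ y ∈ F, x * y ∈ F) ∧ ∀ x ∈ F, ∀ y : α, x ≤ y → y ∈ F

/-- A prime filter: a proper filter such that `x ⊔ y ∈ P` implies `x ∈ P` or `y ∈ P`. -/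
def IsPrimeFilter (P : Set α) : Prop :=
  IsFilter P ∧ P ≠ Set.univ ∧ ∀ x y : α, x ⊔ y ∈ P → x ∈ P ∨ y ∈ P

/-- A `∨`-closed subset: nonempty and closed under join. -/
def IsJoinClosed (C : Set α) : Prop :=
  C.Nonempty ∧ ∀ x ∈ C, ∀ y ∈ C, x ⊔ y ∈ C

/-- The filter generated by a set. -/
def filterGen (X : Set α) : Set α := ⋂₀ {G : Set α | IsFilter G ∧ X ⊆ G}

/-- An `X`-minimal prime filter: prime, contains `X`, minimal among primes containing `X`. -/
def IsMinPrimeOver (X P : Set α) : Prop :=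
  IsPrimeFilter P ∧ X ⊆ P ∧ ∀ Q : Set α, IsPrimeFilter Q → X ⊆ Q → Q ⊆ P → Q = P

/-- `ω_F(X) = {a | x ∨ a ∈ F for some x ∈ X}`. -/
def omegaF (F X : Set α) : Set α := {a : α | ∃ x ∈ X, x ⊔ a ∈ F}

/-- The coannihilator `(F : x) = {a | x ∨ a ∈ F}`. -/
def coann (F : Set α) (x : α) : Set α := {a : α | x ⊔ a ∈ F}

/-- `D_F(H) = {a | x ∨ a ∈ F for some x ∉ H}`, the set of `F`-divisors of `H`. -/
def divisorsF (F H : Set α) : Set α := {a : α | ∃ x ∉ H, x ⊔ a ∈ F}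

/-- A lattice ideal: nonempty, closed under join and downward closed. -/
def IsLatticeIdeal (I : Set α) : Prop :=
  I.Nonempty ∧ (∀ x ∈ I, ∀ y ∈ I, x ⊔ y ∈ I) ∧ ∀ x y : α, x ≤ y → y ∈ I → x ∈ I

/-- The lattice ideal generated by a set. -/
def idealGen (X : Set α) : Set α := ⋂₀ {I : Set α | IsLatticeIdeal I ∧ X ⊆ I}

/-- An `ω_F`-filter: a filter of the form `ω_F(I)` for some lattice ideal `I`. -/
def IsOmegaFilter (F H : Set α) : Prop :=
  IsFilter H ∧ ∃ I : Set α, IsLatticeIdeal I ∧ H = omegaF F I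

namespace ResiduatedLattice

instance toIsOrderedMonoid : IsOrderedMonoid α where
  mul_le_mul_left a b hab c :=
    (adjunction a c (b * c)).2 (hab.trans ((adjunction b c (b * c)).1 le_rfl))

theorem le_one (x : α) : x ≤ 1 := one_eq_top (α := α) ▸ le_top

theorem mul_le_left (a b : α) : a * b ≤ a := mul_le_of_le_one_right' (le_one b)

theorem mul_le_right (a b : α) : a * b ≤ b := mul_le_of_le_one_left' (le_one a)

theorem sup_mul (x y z : α) : (x ⊔ y) * z = x * z ⊔ y * z :=
  le_antisymm
    ((adjunction _ _ _).2 <|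
      sup_le ((adjunction _ _ _).1 le_sup_left) ((adjunction _ _ _).1 le_sup_right))
    (sup_le (mul_le_mul_left le_sup_left z) (mul_le_mul_left le_sup_right z))

theorem mul_sup (x y z : α) : x * (y ⊔ z) = x * y ⊔ x * z := by
  simp only [mul_comm x, sup_mul]

theorem sup_mul_sup_le (a b c : α) : (a ⊔ c) * (b ⊔ c) ≤ a * b ⊔ c := by
  rw [sup_mul, mul_sup, mul_sup]
  exact sup_le (sup_le le_sup_left ((mul_le_right a c).trans le_sup_right))
    (sup_le ((mul_le_left c b).trans le_sup_right) ((mul_le_left c c).trans le_sup_right))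

theorem sup_pow_le (a c : α) (n : ℕ) : (a ⊔ c) ^ n ≤ a ^ n ⊔ c := by
  induction n with
  | zero => simp only [pow_zero, le_sup_left]
  | succ n ih =>
    calc (a ⊔ c) ^ (n + 1) = (a ⊔ c) ^ n * (a ⊔ c) := pow_succ _ _
      _ ≤ (a ^ n ⊔ c) * (a ⊔ c) := mul_le_mul_left ih _
      _ ≤ a ^ (n + 1) ⊔ c := pow_succ a n ▸ sup_mul_sup_le _ _ _

theorem sup_pow_mul_le (x y : α) (m n : ℕ) : (x ⊔ y) ^ (m * n) ≤ x ^ n ⊔ y ^ m :=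
  calc (x ⊔ y) ^ (m * n) = ((y ⊔ x) ^ m) ^ n := by rw [sup_comm, pow_mul]
    _ ≤ (x ⊔ y ^ m) ^ n := pow_le_pow_left' (sup_comm (y ^ m) x ▸ sup_pow_le y x m) n
    _ ≤ x ^ n ⊔ y ^ m := sup_pow_le x (y ^ m) n

end ResiduatedLattice

open ResiduatedLattice Set

theorem IsFilter.one_mem {F : Set α} (hF : IsFilter F) : (1 : α) ∈ F :=
  let ⟨⟨z, hz⟩, _, hup⟩ := hF
  hup z hz 1 (le_one z)

theorem IsFilter.pow_mem {F : Set α} (hF : IsFilter F) {x : α} (hx : x ∈ F) (n : ℕ) :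
    x ^ n ∈ F := by
  induction n with
  | zero => simpa only [pow_zero] using hF.one_mem
  | succ n ih => simpa only [pow_succ] using hF.2.1 _ ih _ hx

theorem isFilter_sInter {S : Set (Set α)} (hS : ∀ G ∈ S, IsFilter G) : IsFilter (⋂₀ S) :=
  ⟨⟨1, fun G hG => (hS G hG).one_mem⟩,
    fun x hx y hy G hG => (hS G hG).2.1 x (hx G hG) y (hy G hG),
    fun x hx y hxy G hG => (hS G hG).2.2 x (hx G hG) y hxy⟩

theorem IsChain.isFilter_sUnion {c : Set (Set α)} (hc : IsChain (· ⊆ ·) c) (hne : c.Nonempty)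
    (hF : ∀ G ∈ c, IsFilter G) : IsFilter (⋃₀ c) := by
  obtain ⟨G₀, hG₀⟩ := hne
  refine ⟨⟨1, G₀, hG₀, (hF G₀ hG₀).one_mem⟩, ?_, ?_⟩
  · rintro x ⟨G₁, hG₁, hx⟩ y ⟨G₂, hG₂, hy⟩
    rcases hc.total hG₁ hG₂ with h | h
    · exact ⟨G₂, hG₂, (hF G₂ hG₂).2.1 x (h hx) y hy⟩
    · exact ⟨G₁, hG₁, (hF G₁ hG₁).2.1 x hx y (h hy)⟩
  · rintro x ⟨G, hG, hx⟩ y hxy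
    exact ⟨G, hG, (hF G hG).2.2 x hx y hxy⟩

theorem isFilter_filterGen (X : Set α) : IsFilter (filterGen X) :=
  isFilter_sInter fun _ hG => hG.1

theorem subset_filterGen (X : Set α) : X ⊆ filterGen X :=
  subset_sInter fun _ hG => hG.2

/-- The filter generated by `F ∪ {x}` when `F` is a filter. -/
def filterAdjoin (F : Set α) (x : α) : Set α := {b | ∃ p ∈ F, ∃ n : ℕ, p * x ^ n ≤ b}

theorem subset_filterAdjoin (F : Set α) (x : α) : F ⊆ filterAdjoin F x :=
  fun p hp => ⟨p, hp, 0, by rw [pow_zero, mul_one]⟩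

namespace IsFilter

variable {F : Set α} (hF : IsFilter F)
include hF

theorem filterAdjoin (x : α) : IsFilter (filterAdjoin F x) := by
  refine ⟨hF.1.mono (subset_filterAdjoin F x), ?_, ?_⟩
  · rintro a ⟨p, hp, n, hpn⟩ b ⟨q, hq, m, hqm⟩
    refine ⟨p * q, hF.2.1 p hp q hq, n + m, ?_⟩
    calc p * q * x ^ (n + m) = p * x ^ n * (q * x ^ m) := by rw [pow_add, mul_mul_mul_comm]
      _ ≤ a * b := mul_le_mul' hpn hqm
  · rintro a ⟨p, hp, n, hpn⟩ b hab
    exact ⟨p, hp, n, hpn.trans hab⟩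

theorem mem_filterAdjoin (x : α) : x ∈ _root_.filterAdjoin F x :=
  ⟨1, hF.one_mem, 1, by rw [one_mul, pow_one]⟩

theorem filterAdjoin_subset {x : α} (hx : x ∈ F) : _root_.filterAdjoin F x ⊆ F :=
  fun _ ⟨p, hp, n, hpn⟩ => hF.2.2 _ (hF.2.1 p hp _ (hF.pow_mem hx n)) _ hpn

theorem filterAdjoin_inter_subset (x y : α) :
    _root_.filterAdjoin F x ∩ _root_.filterAdjoin F y ⊆ _root_.filterAdjoin F (x ⊔ y) := by
  rintro b ⟨⟨p, hp, n, hpn⟩, ⟨q, hq, m, hqm⟩⟩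
  refine ⟨p * q, hF.2.1 p hp q hq, m * n, ?_⟩
  calc p * q * (x ⊔ y) ^ (m * n) ≤ p * q * (x ^ n ⊔ y ^ m) :=
        mul_le_mul_right (sup_pow_mul_le x y m n) _
    _ = p * q * x ^ n ⊔ p * q * y ^ m := mul_sup _ _ _
    _ ≤ b := sup_le ((mul_le_mul_left (mul_le_left p q) _).trans hpn)
        ((mul_le_mul_left (mul_le_right p q) _).trans hqm)

end IsFilter

theorem isPrimeFilter_of_maximal {a : α} {P : Set α}
    (hP : Maximal (fun G => IsFilter G ∧ a ∉ G) P) : IsPrimeFilter P := by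
  obtain ⟨⟨hPF, haP⟩, hmax⟩ := hP
  have mem_filterAdjoin_of_notMem : ∀ x ∉ P, a ∈ filterAdjoin P x := fun x hx => by
    by_contra ha
    exact hx (hmax ⟨hPF.filterAdjoin x, ha⟩ (subset_filterAdjoin P x) (hPF.mem_filterAdjoin x))
  refine ⟨hPF, fun h => haP (h ▸ mem_univ a), fun x y hxy => ?_⟩
  rw [or_iff_not_imp_left]
  intro hx
  by_contra hy
  exact haP <| hPF.filterAdjoin_subset hxy <| hPF.filterAdjoin_inter_subset x y
    ⟨mem_filterAdjoin_of_notMem x hx, mem_filterAdjoin_of_notMem y hy⟩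

theorem IsFilter.exists_isPrimeFilter {F : Set α} (hF : IsFilter F) {a : α} (ha : a ∉ F) :
    ∃ P, IsPrimeFilter P ∧ F ⊆ P ∧ a ∉ P := by
  obtain ⟨P, hFP, hP⟩ := zorn_subset_nonempty {G | IsFilter G ∧ a ∉ G}
    (fun c hcS hc hne => ⟨⋃₀ c,
      ⟨hc.isFilter_sUnion hne fun G hG => (hcS hG).1,
        fun ⟨G, hG, haG⟩ => (hcS hG).2 haG⟩,
      fun _ => subset_sUnion_of_mem⟩) F ⟨hF, ha⟩
  exact ⟨P, isPrimeFilter_of_maximal hP, hFP, hP.1.2⟩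

/-- Corollary 2.5(2): the filter generated by `X` is the intersection of all
prime filters containing `X`. -/
theorem stmt_1 (X : Set α) :
    filterGen X = ⋂₀ {P : Set α | IsPrimeFilter P ∧ X ⊆ P} := by
  have primes_subset : {P : Set α | IsPrimeFilter P ∧ X ⊆ P} ⊆ {G | IsFilter G ∧ X ⊆ G} :=
    fun P hP => ⟨hP.1.1, hP.2⟩
  refine (sInter_subset_sInter primes_subset).antisymm fun a ha => ?_
  by_contra haX
  obtain ⟨P, hP, hXP, haP⟩ := (isFilter_filterGen X).exists_isPrimeFilter haX
  exact haP (ha P ⟨hP, (subset_filterGen X).trans hXP⟩)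
end

section
/- Let A be a residuated lattice, F a filter of A, and C a ∨-closed subset of A. The following are equivalent: (1) F ∩ C = ∅; (2) ω_F(C) ≠ A; (3) ω_F(C) ∩ C = ∅. -/
variable {α : Type*} [ResiduatedLattice α]

theorem IsFilter.isUpperSet {F : Set α} (hF : IsFilter F) : IsUpperSet F :=
  fun _ _ hxy hx => hF.2.2 _ hx _ hxy

theorem IsJoinClosed.supClosed {C : Set α} (hC : IsJoinClosed C) : SupClosed C :=
  hC.2

theorem omegaF_inter_eq_empty {F C : Set α} (hC : SupClosed C) (h : F ∩ C = ∅) :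
    omegaF F C ∩ C = ∅ :=
  Set.eq_empty_of_forall_notMem fun _ ⟨⟨_, hx, hxa⟩, ha⟩ =>
    (Set.eq_empty_iff_forall_notMem.1 h) _ ⟨hxa, hC hx ha⟩

theorem omegaF_eq_univ_of_inter_nonempty {F C : Set α} (hF : IsUpperSet F)
    (h : (F ∩ C).Nonempty) : omegaF F C = Set.univ := by
  obtain ⟨c, hcF, hcC⟩ := h
  exact Set.eq_univ_of_forall fun _ => ⟨c, hcC, hF le_sup_left hcF⟩

/-- Proposition 3.4: for a filter `F` and a `∨`-closed set `C`, the following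
are equivalent: `F ∩ C = ∅`; `ω_F(C)` is proper; `ω_F(C) ∩ C = ∅`. -/
theorem stmt_5 (F C : Set α) (hF : IsFilter F) (hC : IsJoinClosed C) :
    (F ∩ C = ∅ ↔ omegaF F C ≠ Set.univ) ∧
    (F ∩ C = ∅ ↔ omegaF F C ∩ C = ∅) := by
  have h13 : F ∩ C = ∅ → omegaF F C ∩ C = ∅ := omegaF_inter_eq_empty hC.supClosed
  have h32 : omegaF F C ∩ C = ∅ → omegaF F C ≠ Set.univ := fun h hu =>
    hC.1.ne_empty (by simpa [hu] using h)
  have h21 : omegaF F C ≠ Set.univ → F ∩ C = ∅ := fun h =>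
    Set.not_nonempty_iff_eq_empty.1 fun hFC =>
      h (omegaF_eq_univ_of_inter_nonempty hF.isUpperSet hFC)
  exact ⟨⟨fun h => h32 (h13 h), h21⟩, ⟨h13, fun h => h21 (h32 h)⟩⟩
end
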